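/- The Paley tournament ST_7 has exactly 21 maximal transitive subtournaments (equivalently, exactly 21 minimal feedback vertex sets): each vertex is the source of exactly 3 distinct maximal transitive triangles. -/

import Mathlib

/-- A set `W` of vertices is acyclic if the digraph `r` restricted to `W`
has no directed cycle (the transitive closure restricted to `W` is irreflexive). -/
def AcyclicOn {V : Type*} (r : V → V → Prop) (W : Set V) : Prop :=
  ∀ v : V, ¬ Relation.TransGen (fun a b => a ∈ W ∧ b ∈ W ∧ r a b) v v

/-- A tournament: an irreflexive relation with exactly one arc between
every pair of distinct vertices. -/
def IsTournament {V : Type*} (r : V → V → Prop) : Prop :=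
  (∀ v : V, ¬ r v v) ∧ ∀ u v : V, u ≠ v → (r u v ↔ ¬ r v u)

/-- A feedback vertex set: its deletion leaves an acyclic digraph. -/
def IsFVS {V : Type*} (r : V → V → Prop) (F : Set V) : Prop :=
  AcyclicOn r Fᶜ

/-- A minimal feedback vertex set. -/
def IsMinimalFVS {V : Type*} (r : V → V → Prop) (F : Set V) : Prop :=
  IsFVS r F ∧ ∀ F' : Set V, F' ⊆ F → IsFVS r F' → F' = F

/-- A feedback vertex set of the subtournament induced on `S`. -/
def IsFVSOn {V : Type*} (r : V → V → Prop) (S F : Set V) : Prop :=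
  F ⊆ S ∧ AcyclicOn r (S \ F)

/-- A minimal feedback vertex set of the subtournament induced on `S`. -/
def IsMinimalFVSOn {V : Type*} (r : V → V → Prop) (S F : Set V) : Prop :=
  IsFVSOn r S F ∧ ∀ F' : Set V, F' ⊆ F → IsFVSOn r S F' → F' = F

/-- Strong (strongly connected): a directed path between any ordered pair. -/
def IsStrong {V : Type*} (r : V → V → Prop) : Prop :=
  ∀ u v : V, Relation.ReflTransGen r u v

/-- The subtournament induced on `S` is strong. -/
def IsStrongOn {V : Type*} (r : V → V → Prop) (S : Set V) : Prop :=
  ∀ u ∈ S, ∀ v ∈ S, Relation.ReflTransGen (fun a b => a ∈ S ∧ b ∈ S ∧ r a b) u v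

/-- The score (out-degree) of a vertex. -/
noncomputable def outScore {V : Type*} (r : V → V → Prop) (v : V) : ℕ :=
  {u : V | r v u}.ncard

/-- The number of minimal feedback vertex sets of a tournament. -/
noncomputable def fvsCount (V : Type*) (r : V → V → Prop) : ℕ :=
  {F : Set V | IsMinimalFVS r F}.ncard

/-- `maxMinFVS n` = maximum number of minimal FVSs over all `n`-vertex tournaments. -/
noncomputable def maxMinFVS (n : ℕ) : ℕ :=
  sSup {k : ℕ | ∃ r : Fin n → Fin n → Prop, IsTournament r ∧ fvsCount (Fin n) r = k}


/-- The Paley tournament of order 7: arc from `i` to `j` iff `(j-i) mod 7 ∈ {1,2,4}`. -/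
def ST7 (i j : ZMod 7) : Prop := (j - i).val ∈ ({1, 2, 4} : Set ℕ)


/-!
In a tournament, a finite vertex set is acyclic as soon as it contains no cyclic triangle:
the in-degree inside the set then strictly increases along every arc. Maximal transitive
subtournaments of `ST7` are therefore the maximal cyclic-triangle-free vertex sets, a
decidable property of the 128 subsets of `ZMod 7`, and complementation matches them with the
minimal feedback vertex sets. Mathematically: the out-neighbourhood `{v+1, v+2, v+4}` of every
vertex is a cyclic triangle, so transitive sets have at most three vertices, and the maximal
ones are the 21 triples `{v, v+a, v+b}` with `a ≠ b` in `{1, 2, 4}`, three for each source `v`.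
-/

def IsMaximalAcyclic {V : Type*} (r : V → V → Prop) (W : Set V) : Prop :=
  AcyclicOn r W ∧ ∀ X : Set V, W ⊆ X → AcyclicOn r X → X = W

def CyclicTripleFree {V : Type*} (r : V → V → Prop) (s : Finset V) : Prop :=
  ∀ a ∈ s, ∀ b ∈ s, ∀ c ∈ s, ¬ (r a b ∧ r b c ∧ r c a)

instance {V : Type*} (r : V → V → Prop) [DecidableRel r] :
    DecidablePred (CyclicTripleFree r) :=
  fun s => by unfold CyclicTripleFree; infer_instance

def IsMaximalCyclicTripleFree {V : Type*} [DecidableEq V] (r : V → V → Prop)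
    (s : Finset V) : Prop :=
  CyclicTripleFree r s ∧ ∀ v ∉ s, ¬ CyclicTripleFree r (insert v s)

instance {V : Type*} [Fintype V] [DecidableEq V] (r : V → V → Prop) [DecidableRel r] :
    DecidablePred (IsMaximalCyclicTripleFree r) :=
  fun s => by unfold IsMaximalCyclicTripleFree; infer_instance

section General

variable {V : Type*} {r : V → V → Prop}

theorem AcyclicOn.mono {W X : Set V} (h : W ⊆ X) (hX : AcyclicOn r X) : AcyclicOn r W :=
  fun v hv => hX v (Relation.TransGen.mono (fun _ _ ⟨ha, hb, hab⟩ => ⟨h ha, h hb, hab⟩) _ _ hv)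

theorem AcyclicOn.not_cyclic_triple {W : Set V} (hW : AcyclicOn r W) {a b c : V}
    (ha : a ∈ W) (hb : b ∈ W) (hc : c ∈ W) : ¬ (r a b ∧ r b c ∧ r c a) :=
  fun ⟨hab, hbc, hca⟩ => hW a <| .head ⟨ha, hb, hab⟩ <| .head ⟨hb, hc, hbc⟩ <| .single ⟨hc, ha, hca⟩

theorem IsTournament.not_rel_of_rel (ht : IsTournament r) {a b : V} (hab : r a b) : ¬ r b a :=
  (ht.2 a b fun h => ht.1 a (h ▸ hab)).mp hab

theorem IsTournament.rel_of_not_rel (ht : IsTournament r) {a b : V} (hne : a ≠ b)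
    (hab : ¬ r a b) : r b a := by
  by_contra hba
  exact hab ((ht.2 a b hne).mpr hba)

theorem IsTournament.acyclicOn_of_cyclicTripleFree (ht : IsTournament r) {s : Finset V}
    (hs : CyclicTripleFree r s) : AcyclicOn r ↑s := by
  classical
  let inDeg : V → ℕ := fun v => (s.filter (r · v)).card
  have inDeg_lt : ∀ a ∈ s, ∀ b ∈ s, r a b → inDeg a < inDeg b := by
    intro a ha b hb hab
    refine Finset.card_lt_card ((Finset.ssubset_iff_of_subset ?_).mpr
      ⟨a, Finset.mem_filter.mpr ⟨ha, hab⟩, fun h => ht.1 a (Finset.mem_filter.mp h).2⟩)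
    intro u hu
    obtain ⟨hus, hua⟩ := Finset.mem_filter.mp hu
    refine Finset.mem_filter.mpr ⟨hus, ?_⟩
    by_cases hub : u = b
    · exact absurd (hub ▸ hua) (ht.not_rel_of_rel hab)
    · by_contra hnub
      exact hs b hb u hus a ha ⟨ht.rel_of_not_rel hub hnub, hua, hab⟩
  have inDeg_lt_of_transGen : ∀ x y,
      Relation.TransGen (fun a b => a ∈ (↑s : Set V) ∧ b ∈ (↑s : Set V) ∧ r a b) x y →
      inDeg x < inDeg y := by
    intro x y h
    induction h with
    | single h => exact inDeg_lt _ h.1 _ h.2.1 h.2.2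
    | tail _ h ih => exact ih.trans (inDeg_lt _ h.1 _ h.2.1 h.2.2)
  exact fun v hv => lt_irrefl _ (inDeg_lt_of_transGen v v hv)

theorem IsTournament.acyclicOn_coe_iff (ht : IsTournament r) (s : Finset V) :
    AcyclicOn r ↑s ↔ CyclicTripleFree r s :=
  ⟨fun h _ ha _ hb _ hc => h.not_cyclic_triple ha hb hc, ht.acyclicOn_of_cyclicTripleFree⟩

theorem IsTournament.isMaximalAcyclic_coe_iff [DecidableEq V]
    (ht : IsTournament r) (s : Finset V) :
    IsMaximalAcyclic r ↑s ↔ IsMaximalCyclicTripleFree r s := by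
  simp only [IsMaximalAcyclic, IsMaximalCyclicTripleFree, ht.acyclicOn_coe_iff]
  refine and_congr_right fun _ => ⟨fun hmax v hv hfree => hv ?_, fun hmax X hsX hX => ?_⟩
  · have := hmax _ (by simp [Set.subset_insert]) ((ht.acyclicOn_coe_iff _).mpr hfree)
    exact Finset.mem_coe.mp (this ▸ by simp)
  · refine (Set.Subset.antisymm (fun v hvX => ?_) hsX)
    by_contra hvs
    refine hmax v hvs ((ht.acyclicOn_coe_iff _).mp (hX.mono ?_))
    simpa [Set.insert_subset_iff] using ⟨hvX, hsX⟩

theorem isMinimalFVS_iff_isMaximalAcyclic_compl (F : Set V) :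
    IsMinimalFVS r F ↔ IsMaximalAcyclic r Fᶜ := by
  refine and_congr_right fun _ => ⟨fun h X hX hXac => ?_, fun h F' hF' hF'fvs => ?_⟩
  · rw [← h Xᶜ (Set.compl_subset_comm.mpr hX) (by rwa [IsFVS, compl_compl]), compl_compl]
  · exact compl_injective (h F'ᶜ (Set.compl_subset_compl.mpr hF') hF'fvs)

theorem ncard_setOf_isMinimalFVS :
    {F : Set V | IsMinimalFVS r F}.ncard = {W : Set V | IsMaximalAcyclic r W}.ncard := by
  have : {F : Set V | IsMinimalFVS r F} = compl '' {W : Set V | IsMaximalAcyclic r W} := by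
    ext F
    simp [isMinimalFVS_iff_isMaximalAcyclic_compl, ← compl_eq_comm]
  rw [this, Set.ncard_image_of_injective _ compl_injective]

theorem Set.ncard_setOf_eq_card_filter [Fintype V] (p : Set V → Prop) (q : Finset V → Prop)
    [DecidablePred q] (hpq : ∀ s : Finset V, p ↑s ↔ q s) :
    {W : Set V | p W}.ncard = (Finset.univ.filter q).card := by
  have : {W : Set V | p W} = (↑) '' (↑(Finset.univ.filter q) : Set (Finset V)) := by
    ext W
    obtain ⟨s, rfl⟩ : ∃ s : Finset V, ↑s = W := ⟨W.toFinite.toFinset, W.toFinite.coe_toFinset⟩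
    simp [hpq, Finset.coe_injective.eq_iff]
  rw [this, Set.ncard_image_of_injective _ Finset.coe_injective, Set.ncard_coe_finset]

end General

instance : DecidableRel ST7 := fun i j =>
  decidable_of_iff ((j - i).val ∈ ({1, 2, 4} : Finset ℕ)) (by simp [ST7])

theorem isTournament_ST7 : IsTournament ST7 := ⟨by decide, by decide⟩

/-- `ST_7` has exactly 21 maximal transitive subtournaments, equivalently exactly
21 minimal feedback vertex sets; each vertex is the source of exactly 3 of the
maximal transitive (triangle) vertex sets. -/
theorem stmt9 :
    {W : Set (ZMod 7) | AcyclicOn ST7 W ∧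
      ∀ X : Set (ZMod 7), W ⊆ X → AcyclicOn ST7 X → X = W}.ncard = 21 ∧
    {F : Set (ZMod 7) | IsMinimalFVS ST7 F}.ncard = 21 ∧
    ∀ v : ZMod 7,
      {W : Set (ZMod 7) | (AcyclicOn ST7 W ∧
          (∀ X : Set (ZMod 7), W ⊆ X → AcyclicOn ST7 X → X = W)) ∧
        v ∈ W ∧ ∀ u ∈ W, u ≠ v → ST7 v u}.ncard = 3 := by
  have maximal : {W : Set (ZMod 7) | IsMaximalAcyclic ST7 W}.ncard = 21 := by
    rw [Set.ncard_setOf_eq_card_filter _ _ isTournament_ST7.isMaximalAcyclic_coe_iff]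
    decide
  refine ⟨maximal, ncard_setOf_isMinimalFVS.trans maximal, fun v => ?_⟩
  rw [Set.ncard_setOf_eq_card_filter _
    (fun s => IsMaximalCyclicTripleFree ST7 s ∧ v ∈ s ∧ ∀ u ∈ s, u ≠ v → ST7 v u)
    (fun s => by simp only [← isTournament_ST7.isMaximalAcyclic_coe_iff, Finset.mem_coe]; rfl)]
  revert v
  decide
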